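/- For every N ∈ ℕ there exists B₀ ≥ 1 such that for all B ≥ B₀ the following holds: every finitely supported probability measure ξ* on [0,1] that maximizes the Bayesian D-criterion Ψ_B(ξ) = ∫₁^B log( e²β² ∫₀¹ x² e^{−2βx} dξ(x) ) dβ (corresponding to the uniform prior on [1,B]; the integrand may equal −∞) over all finitely supported probability measures ξ on [0,1] is supported at more than N points. -/

import Mathlib

/-!
Suppose an optimal design `ξ` had at most `N` support points. For `c ≤ 2B/3` and `K` with
`e^{2K} ≥ 16B/c`, a support point `x` outside `(2/(3e^{1+K}c), (4K+4)/c)` has `βx ≥ 2K + 2` or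
`βx ≤ e^{-1-K}` for every `β ∈ [2c/3, 3c/2]`, so its efficiency there is at most `e^{-2K}`.
If no support point falls in that window, mixing `δ_{1/c}` into `ξ` with weight `α = e^{1-2K}`
gains at least `1/2` on `[2c/3, 3c/2]` and loses at most `-log(1-α) ≤ 2α` everywhere, a net
change of at most `2α B - 5c/12 ≤ (e/8 - 5/12) c < 0`, contradicting optimality. With
`c = B e^{-2s}` and `K = s + 2` the window lies in `(e^{s-5}/B, e^{6s+11}/B)`; for
`s = 8, 8², …, 8^{N+1}` these are pairwise disjoint, and the argument applies to all of them once
`B ≥ e^{2·8^{N+1}+1}`, so they cannot all contain one of at most `N` support points.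
-/

open scoped BigOperators ENNReal

/-- An approximate design on `ℝ`: a finitely supported probability measure,
given by its support points and positive weights summing to one. -/
structure Design where
  support : Finset ℝ
  w : ℝ → ℝ
  w_pos : ∀ x ∈ support, 0 < w x
  w_zero : ∀ x ∉ support, w x = 0
  sum_one : ∑ x ∈ support, w x = 1

/-- Information `M(ξ,β) = ∫₀¹ x² e^{−2βx} dξ(x)` of a design in the one-parameter
exponential model `η(x,β) = e^{−βx}`. -/
noncomputable def expInfo (ξ : Design) (β : ℝ) : ℝ :=
  ∑ x ∈ ξ.support, ξ.w x * (x ^ 2 * Real.exp (-2 * β * x))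

/-- `negLog r` is `−log r` as an extended nonnegative real, with value `∞` for `r ≤ 0`.
Since the integrand `log(e²β² M(ξ,β))` of the Bayesian criterion is nonpositive (and may
be `−∞`), maximizing `Ψ_B(ξ) = ∫₁^B log(e²β² M(ξ,β)) dβ` is the same as minimizing the
Lebesgue integral `∫⁻` of its negative part `negLog (e²β² M(ξ,β))`. -/
noncomputable def negLog (r : ℝ) : ℝ≥0∞ :=
  if r ≤ 0 then ⊤ else ENNReal.ofReal (-Real.log r)

/-- Bayesian loss of a design with respect to the uniform prior on `[1,B]`:
`−Ψ_B(ξ) = ∫₁^B −log(e²β² M(ξ,β)) dβ`, with value `∞` allowed. -/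
noncomputable def bayesLoss (B : ℝ) (ξ : Design) : ℝ≥0∞ :=
  ∫⁻ β in Set.Icc (1 : ℝ) B, negLog (Real.exp 2 * β ^ 2 * expInfo ξ β)

open Real MeasureTheory Set

namespace Design

lemma w_nonneg (ξ : Design) (x : ℝ) : 0 ≤ ξ.w x := by
  by_cases hx : x ∈ ξ.support
  · exact (ξ.w_pos x hx).le
  · rw [ξ.w_zero x hx]

lemma sum_mul_eq_of_subset (ξ : Design) {s : Finset ℝ} (hs : ξ.support ⊆ s) (φ : ℝ → ℝ) :
    ∑ x ∈ s, ξ.w x * φ x = ∑ x ∈ ξ.support, ξ.w x * φ x :=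
  (Finset.sum_subset hs fun x _ hx => by rw [ξ.w_zero x hx, zero_mul]).symm

noncomputable def dirac (x₀ : ℝ) : Design where
  support := {x₀}
  w x := if x = x₀ then 1 else 0
  w_pos x hx := by simp [Finset.mem_singleton.mp hx]
  w_zero x hx := if_neg (Finset.notMem_singleton.mp hx)
  sum_one := by simp

lemma sum_mul_dirac (x₀ : ℝ) (φ : ℝ → ℝ) :
    ∑ x ∈ (dirac x₀).support, (dirac x₀).w x * φ x = φ x₀ := by
  simp [dirac]

lemma sum_mul_convexComb (ξ η : Design) (α : ℝ) (φ : ℝ → ℝ) :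
    ∑ x ∈ ξ.support ∪ η.support, ((1 - α) * ξ.w x + α * η.w x) * φ x
      = (1 - α) * ∑ x ∈ ξ.support, ξ.w x * φ x + α * ∑ x ∈ η.support, η.w x * φ x := by
  simp only [add_mul, Finset.sum_add_distrib, mul_assoc, ← Finset.mul_sum,
    ξ.sum_mul_eq_of_subset Finset.subset_union_left,
    η.sum_mul_eq_of_subset Finset.subset_union_right]

noncomputable def mix (ξ η : Design) (α : ℝ) (h0 : 0 < α) (h1 : α < 1) : Design where
  support := ξ.support ∪ η.support
  w x := (1 - α) * ξ.w x + α * η.w x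
  w_pos x hx := by
    have := ξ.w_nonneg x
    have := η.w_nonneg x
    rcases Finset.mem_union.mp hx with h | h
    · nlinarith [ξ.w_pos x h]
    · nlinarith [η.w_pos x h]
  w_zero x hx := by
    rw [Finset.notMem_union] at hx
    rw [ξ.w_zero x hx.1, η.w_zero x hx.2]
    ring
  sum_one := by
    simpa [ξ.sum_one, η.sum_one] using sum_mul_convexComb ξ η α fun _ => 1

end Design

lemma negLog_antitone : Antitone negLog := by
  intro r s hrs
  unfold negLog
  split_ifs with hs hr hr
  · exact le_rfl
  · exact absurd (hrs.trans hs) hr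
  · exact le_top
  · exact ENNReal.ofReal_le_ofReal (neg_le_neg (log_le_log (not_le.mp hr) hrs))

lemma negLog_le_ofReal {r a : ℝ} (h : exp (-a) ≤ r) : negLog r ≤ ENNReal.ofReal a := by
  have hr : 0 < r := (exp_pos _).trans_le h
  rw [negLog, if_neg hr.not_ge]
  exact ENNReal.ofReal_le_ofReal (by linarith [(le_log_iff_exp_le hr).mpr h])

lemma ofReal_le_negLog {r a : ℝ} (h : r ≤ exp (-a)) : ENNReal.ofReal a ≤ negLog r := by
  unfold negLog
  split_ifs with hr
  · exact le_top
  · exact ENNReal.ofReal_le_ofReal (by linarith [(log_le_iff_le_exp (not_le.mp hr)).mpr h])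

lemma negLog_mul_le {s : ℝ} (hs : 0 < s) (r : ℝ) :
    negLog (s * r) ≤ ENNReal.ofReal (-log s) + negLog r := by
  by_cases hr : r ≤ 0
  · simp [negLog, hr]
  · have hr : 0 < r := not_le.mp hr
    rw [negLog, if_neg (mul_pos hs hr).not_ge, negLog, if_neg hr.not_ge, log_mul hs.ne' hr.ne',
      neg_add]
    exact ENNReal.ofReal_add_le

lemma measurable_negLog : Measurable negLog :=
  Measurable.ite measurableSet_Iic measurable_const
    (ENNReal.measurable_ofReal.comp measurable_log.neg)

lemma neg_log_one_sub_le {α : ℝ} (h0 : 0 ≤ α) (h1 : α ≤ 1 / 2) : -log (1 - α) ≤ 2 * α := by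
  have h := one_sub_inv_le_log_of_pos (show 0 < 1 - α by linarith)
  have : (1 - α)⁻¹ ≤ 1 + 2 * α := by
    rw [inv_le_iff_one_le_mul₀ (by linarith)]
    nlinarith
  linarith

/-- The efficiency `M(ξ, β) / (e β)⁻²` of `ξ` relative to the locally D-optimal design
`δ_{1/β}`. -/
noncomputable def localEfficiency (ξ : Design) (β : ℝ) : ℝ :=
  exp 2 * β ^ 2 * expInfo ξ β

/-- The efficiency of a one-point design `δ_x` at `β`, as a function of `t = β x`. -/
noncomputable def pointEfficiency (t : ℝ) : ℝ :=
  exp 2 * t ^ 2 * exp (-(2 * t))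

lemma localEfficiency_eq_sum (ξ : Design) (β : ℝ) :
    localEfficiency ξ β = ∑ x ∈ ξ.support, ξ.w x * pointEfficiency (β * x) := by
  simp only [localEfficiency, expInfo, pointEfficiency, Finset.mul_sum]
  refine Finset.sum_congr rfl fun x _ => ?_
  ring_nf

lemma localEfficiency_nonneg (ξ : Design) (β : ℝ) : 0 ≤ localEfficiency ξ β := by
  rw [localEfficiency_eq_sum]
  exact Finset.sum_nonneg fun x _ =>
    mul_nonneg (ξ.w_nonneg x) (by unfold pointEfficiency; positivity)

lemma localEfficiency_le_of_forall {ξ : Design} {β m : ℝ}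
    (h : ∀ x ∈ ξ.support, pointEfficiency (β * x) ≤ m) : localEfficiency ξ β ≤ m := by
  calc localEfficiency ξ β ≤ ∑ x ∈ ξ.support, ξ.w x * m := by
        rw [localEfficiency_eq_sum]
        exact Finset.sum_le_sum fun x hx => mul_le_mul_of_nonneg_left (h x hx) (ξ.w_nonneg x)
    _ = m := by rw [← Finset.sum_mul, ξ.sum_one, one_mul]

lemma localEfficiency_dirac (x₀ β : ℝ) :
    localEfficiency (Design.dirac x₀) β = pointEfficiency (β * x₀) := by
  rw [localEfficiency_eq_sum, Design.sum_mul_dirac x₀ fun x => pointEfficiency (β * x)]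

lemma localEfficiency_mix (ξ η : Design) {α : ℝ} (h0 : 0 < α) (h1 : α < 1) (β : ℝ) :
    localEfficiency (ξ.mix η α h0 h1) β
      = (1 - α) * localEfficiency ξ β + α * localEfficiency η β := by
  simp only [localEfficiency_eq_sum]
  exact Design.sum_mul_convexComb ξ η α _

lemma exp_neg_two_mul_le_pointEfficiency {t : ℝ} (ht : 1 ≤ t) :
    exp (-(2 * t)) ≤ pointEfficiency t := by
  have : 1 ≤ exp 2 * t ^ 2 := one_le_mul_of_one_le_of_one_le (one_le_exp (by norm_num))
    (one_le_pow₀ ht)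
  unfold pointEfficiency
  exact le_mul_of_one_le_left (exp_pos _).le this

lemma pointEfficiency_le_exp_neg_of_large {t K : ℝ} (hK : 0 ≤ K) (ht : 2 * K + 2 ≤ t) :
    pointEfficiency t ≤ exp (-(2 * K)) := by
  have ht0 : 0 ≤ t := by linarith
  have hlin : t ≤ exp (t / 2) := by
    have := add_one_le_exp (t / 2 - 1)
    rw [exp_sub, le_div_iff₀ (exp_pos 1)] at this
    nlinarith [exp_one_gt_d9, exp_pos (t / 2)]
  have hsq : t ^ 2 ≤ exp t := by
    calc t ^ 2 ≤ exp (t / 2) ^ 2 := pow_le_pow_left₀ ht0 hlin 2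
      _ = exp t := by rw [← exp_nat_mul]; ring_nf
  calc pointEfficiency t ≤ exp 2 * exp t * exp (-(2 * t)) := by
        unfold pointEfficiency; gcongr
    _ = exp (2 - t) := by rw [← exp_add, ← exp_add]; ring_nf
    _ ≤ exp (-(2 * K)) := exp_le_exp.mpr (by linarith)

lemma pointEfficiency_le_exp_neg_of_small {t K : ℝ} (ht0 : 0 ≤ t) (ht : t ≤ exp (-(1 + K))) :
    pointEfficiency t ≤ exp (-(2 * K)) := by
  calc pointEfficiency t ≤ exp 2 * exp (-(1 + K)) ^ 2 * 1 := by
        unfold pointEfficiency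
        gcongr
        exact exp_le_one_iff.mpr (by linarith)
    _ = exp (-(2 * K)) := by rw [mul_one, ← exp_nat_mul, ← exp_add]; ring_nf

lemma exp_neg_half_le_pointEfficiency {t : ℝ} (h1 : 2 / 3 ≤ t) (h2 : t ≤ 3 / 2) :
    exp (-(1 / 2)) ≤ pointEfficiency t := by
  have ht0 : 0 < t := by linarith
  have hlog := one_sub_inv_le_log_of_pos ht0
  have hsum : t + t⁻¹ ≤ 13 / 6 := by
    have : t * t⁻¹ = 1 := mul_inv_cancel₀ ht0.ne'
    nlinarith [mul_nonneg (sub_nonneg.mpr h1) (sub_nonneg.mpr h2)]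
  have : pointEfficiency t = exp (2 + 2 * log t - 2 * t) := by
    rw [pointEfficiency, sub_eq_add_neg, exp_add, exp_add, mul_comm 2 (log t), exp_mul,
      exp_log ht0]
    norm_cast
  rw [this]
  exact exp_le_exp.mpr (by linarith)

lemma le_localEfficiency_mix_left (ξ η : Design) {α : ℝ} (h0 : 0 < α) (h1 : α < 1) (β : ℝ) :
    (1 - α) * localEfficiency ξ β ≤ localEfficiency (ξ.mix η α h0 h1) β := by
  rw [localEfficiency_mix]
  have := localEfficiency_nonneg η β
  nlinarith

lemma le_localEfficiency_mix_right (ξ η : Design) {α : ℝ} (h0 : 0 < α) (h1 : α < 1) (β : ℝ) :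
    α * localEfficiency η β ≤ localEfficiency (ξ.mix η α h0 h1) β := by
  rw [localEfficiency_mix]
  have := localEfficiency_nonneg ξ β
  nlinarith

lemma negLog_localEfficiency_mix_le (ξ η : Design) {α : ℝ} (h0 : 0 < α) (h1 : α < 1)
    (hα : α ≤ 1 / 2) (β : ℝ) :
    negLog (localEfficiency (ξ.mix η α h0 h1) β)
      ≤ negLog (localEfficiency ξ β) + ENNReal.ofReal (2 * α) :=
  calc negLog (localEfficiency (ξ.mix η α h0 h1) β)
      ≤ negLog ((1 - α) * localEfficiency ξ β) :=
        negLog_antitone (le_localEfficiency_mix_left ξ η h0 h1 β)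
    _ ≤ ENNReal.ofReal (-log (1 - α)) + negLog (localEfficiency ξ β) :=
        negLog_mul_le (by linarith) _
    _ ≤ negLog (localEfficiency ξ β) + ENNReal.ofReal (2 * α) := by
        rw [add_comm]
        gcongr
        exact neg_log_one_sub_le h0.le hα

lemma bayesLoss_eq_lintegral (B : ℝ) (ξ : Design) :
    bayesLoss B ξ = ∫⁻ β in Icc 1 B, negLog (localEfficiency ξ β) := rfl

lemma measurable_negLog_localEfficiency (ξ : Design) :
    Measurable fun β => negLog (localEfficiency ξ β) := by
  refine measurable_negLog.comp ?_
  unfold localEfficiency expInfo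
  fun_prop

lemma bayesLoss_dirac_one_ne_top (B : ℝ) : bayesLoss B (Design.dirac 1) ≠ ⊤ := by
  have hbound : ∀ β ∈ Icc 1 B,
      negLog (localEfficiency (Design.dirac 1) β) ≤ ENNReal.ofReal (2 * B) := fun β hβ => by
    rw [localEfficiency_dirac, mul_one]
    exact negLog_le_ofReal ((exp_le_exp.mpr (by linarith [hβ.2])).trans
      (exp_neg_two_mul_le_pointEfficiency hβ.1))
  refine ne_top_of_le_ne_top ?_ (setLIntegral_mono measurable_const hbound)
  rw [setLIntegral_const, Real.volume_Icc]
  exact ENNReal.mul_ne_top ENNReal.ofReal_ne_top ENNReal.ofReal_ne_top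

def IsBayesOptimal (B : ℝ) (ξ : Design) : Prop :=
  ↑ξ.support ⊆ Icc (0 : ℝ) 1 ∧
    ∀ η : Design, ↑η.support ⊆ Icc (0 : ℝ) 1 → bayesLoss B ξ ≤ bayesLoss B η

lemma IsBayesOptimal.bayesLoss_ne_top {B : ℝ} {ξ : Design} (hξ : IsBayesOptimal B ξ) :
    bayesLoss B ξ ≠ ⊤ := by
  refine ne_top_of_le_ne_top (bayesLoss_dirac_one_ne_top B) (hξ.2 _ ?_)
  simp [Design.dirac]

lemma localEfficiency_le_of_forall_notMem_Ioo {ξ : Design} {c K β : ℝ} (hc : 0 < c)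
    (hK : 0 ≤ K) (hsupp : ∀ x ∈ ξ.support, 0 ≤ x)
    (hgap : ∀ x ∈ ξ.support, x ∉ Ioo (2 / (3 * exp (1 + K) * c)) ((4 * K + 4) / c))
    (hβ : β ∈ Icc (2 / 3 * c) (3 / 2 * c)) :
    localEfficiency ξ β ≤ exp (-(2 * K)) := by
  obtain ⟨hβ₁, hβ₂⟩ := hβ
  have hβ0 : 0 ≤ β := by linarith
  refine localEfficiency_le_of_forall fun x hx => ?_
  have hx0 := hsupp x hx
  rcases not_and_or.mp (hgap x hx) with hsmall | hlarge
  · refine pointEfficiency_le_exp_neg_of_small (mul_nonneg hβ0 hx0) ?_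
    have hx : x ≤ 2 / (3 * exp (1 + K) * c) := not_lt.mp hsmall
    calc β * x ≤ 3 / 2 * c * (2 / (3 * exp (1 + K) * c)) := by gcongr
      _ = exp (-(1 + K)) := by field_simp; rw [exp_neg]; field_simp
  · refine pointEfficiency_le_exp_neg_of_large hK ?_
    have hx : (4 * K + 4) / c ≤ x := not_lt.mp hlarge
    calc 2 * K + 2 ≤ 2 / 3 * c * ((4 * K + 4) / c) := by field_simp; linarith
      _ ≤ β * x := by gcongr

lemma negLog_localEfficiency_mix_add_le (ξ η : Design) {α β : ℝ} (h0 : 0 < α) (h1 : α < 1)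
    (hη : exp (-(1 / 2)) ≤ localEfficiency η β) (hξ : localEfficiency ξ β ≤ α * exp (-1)) :
    negLog (localEfficiency (ξ.mix η α h0 h1) β) + ENNReal.ofReal (1 / 2)
      ≤ negLog (localEfficiency ξ β) := by
  have hlog : log α < 0 := log_neg h0 h1
  have hmix : exp (-(1 / 2 - log α)) ≤ localEfficiency (ξ.mix η α h0 h1) β :=
    calc exp (-(1 / 2 - log α)) = α * exp (-(1 / 2)) := by
          rw [← exp_log h0, ← exp_add, log_exp]; ring_nf
      _ ≤ α * localEfficiency η β := by gcongr
      _ ≤ _ := le_localEfficiency_mix_right _ _ _ _ _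
  have hξ' : localEfficiency ξ β ≤ exp (-(1 - log α)) := by
    rwa [neg_sub, sub_eq_add_neg, exp_add, exp_log h0]
  calc negLog (localEfficiency (ξ.mix η α h0 h1) β) + ENNReal.ofReal (1 / 2)
      ≤ ENNReal.ofReal (1 / 2 - log α) + ENNReal.ofReal (1 / 2) := by
        gcongr; exact negLog_le_ofReal hmix
    _ = ENNReal.ofReal (1 - log α) := by
        rw [← ENNReal.ofReal_add (by linarith) (by norm_num)]; ring_nf
    _ ≤ negLog (localEfficiency ξ β) := ofReal_le_negLog hξ'

lemma bayesLoss_add_le_of_forall {ξ η : Design} {B a b g ε : ℝ} (hab : Icc a b ⊆ Icc 1 B)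
    (hg : 0 ≤ g) (hε : 0 ≤ ε)
    (h : ∀ β ∈ Icc 1 B,
      negLog (localEfficiency η β) + (Icc a b).indicator (fun _ => ENNReal.ofReal g) β
        ≤ negLog (localEfficiency ξ β) + ENNReal.ofReal ε) :
    bayesLoss B η + ENNReal.ofReal (g * (b - a))
      ≤ bayesLoss B ξ + ENNReal.ofReal (ε * (B - 1)) := by
  have hint := setLIntegral_mono (μ := volume)
    ((measurable_negLog_localEfficiency ξ).add measurable_const) h
  simp only [Pi.add_apply] at hint
  rwa [lintegral_add_right _ (measurable_const.indicator measurableSet_Icc),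
    lintegral_add_right _ measurable_const, lintegral_indicator measurableSet_Icc,
    setLIntegral_const, setLIntegral_const, Measure.restrict_apply measurableSet_Icc,
    inter_eq_self_of_subset_left hab, Real.volume_Icc, Real.volume_Icc,
    ← ENNReal.ofReal_mul hg, ← ENNReal.ofReal_mul hε] at hint

/-- Mixing in the point `1 / c` with weight `α = e^{1 - 2K}` gains at least `1/2` on the window
`[2c/3, 3c/2]`, where `ξ` is inefficient, and costs at most `2α` elsewhere. -/
lemma exists_bayesLoss_add_le {ξ : Design} {B c K : ℝ} (hsub : ↑ξ.support ⊆ Icc (0 : ℝ) 1)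
    (hc : 3 / 2 ≤ c) (hcB : c ≤ 2 / 3 * B) (hK : 1 ≤ K)
    (hlow : ∀ β ∈ Icc (2 / 3 * c) (3 / 2 * c), localEfficiency ξ β ≤ exp (-(2 * K))) :
    ∃ η : Design, ↑η.support ⊆ Icc (0 : ℝ) 1 ∧
      bayesLoss B η + ENNReal.ofReal (5 / 12 * c)
        ≤ bayesLoss B ξ + ENNReal.ofReal (2 * exp (1 - 2 * K) * (B - 1)) := by
  set α := exp (1 - 2 * K) with hα_def
  have hα0 : 0 < α := exp_pos _
  have hα : α ≤ 1 / 2 :=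
    calc α ≤ exp (-1) := exp_le_exp.mpr (by linarith)
      _ ≤ 1 / 2 := by
        rw [exp_neg, inv_le_comm₀ (exp_pos 1) (by norm_num)]
        linarith [exp_one_gt_d9]
  have hα1 : α < 1 := by linarith
  have hc0 : 0 < c := by linarith
  refine ⟨ξ.mix (Design.dirac c⁻¹) α hα0 hα1, ?_, ?_⟩
  · simp only [Design.mix, Design.dirac, Finset.coe_union, Finset.coe_singleton]
    exact union_subset hsub
      (singleton_subset_iff.mpr ⟨by positivity, inv_le_one_of_one_le₀ (by linarith)⟩)
  have hgain : ∀ β ∈ Icc (2 / 3 * c) (3 / 2 * c),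
      negLog (localEfficiency (ξ.mix (Design.dirac c⁻¹) α hα0 hα1) β) + ENNReal.ofReal (1 / 2)
        ≤ negLog (localEfficiency ξ β) := fun β hβ => by
    refine negLog_localEfficiency_mix_add_le _ _ _ _ ?_ ?_
    · rw [localEfficiency_dirac, ← div_eq_mul_inv]
      exact exp_neg_half_le_pointEfficiency ((le_div_iff₀ hc0).mpr hβ.1)
        ((div_le_iff₀ hc0).mpr hβ.2)
    · rw [hα_def, ← exp_add]
      convert hlow β hβ using 2
      ring
  have hpointwise : ∀ β ∈ Icc 1 B,
      negLog (localEfficiency (ξ.mix (Design.dirac c⁻¹) α hα0 hα1) β)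
          + (Icc (2 / 3 * c) (3 / 2 * c)).indicator (fun _ => ENNReal.ofReal (1 / 2)) β
        ≤ negLog (localEfficiency ξ β) + ENNReal.ofReal (2 * α) := fun β _ => by
    by_cases hβ : β ∈ Icc (2 / 3 * c) (3 / 2 * c)
    · rw [indicator_of_mem hβ]
      exact (hgain β hβ).trans le_self_add
    · rw [indicator_of_notMem hβ, add_zero]
      exact negLog_localEfficiency_mix_le _ _ _ _ hα _
  convert bayesLoss_add_le_of_forall (Icc_subset_Icc (by linarith) (by linarith))
    (by norm_num) (by positivity) hpointwise using 3
  ring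

theorem IsBayesOptimal.exists_mem_support_Ioo {ξ : Design} {B c K : ℝ}
    (hξ : IsBayesOptimal B ξ) (hc : 3 / 2 ≤ c) (hcB : c ≤ 2 / 3 * B) (hK : 1 ≤ K)
    (hKc : 16 * B ≤ c * exp (2 * K)) :
    ∃ x ∈ ξ.support, x ∈ Ioo (2 / (3 * exp (1 + K) * c)) ((4 * K + 4) / c) := by
  by_contra! hgap
  obtain ⟨η, hη, hle⟩ := exists_bayesLoss_add_le hξ.1 hc hcB hK fun β =>
    localEfficiency_le_of_forall_notMem_Ioo (by linarith) (by linarith)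
      (fun x hx => (hξ.1 hx).1) hgap
  have hcost : ENNReal.ofReal (5 / 12 * c) ≤ ENNReal.ofReal (2 * exp (1 - 2 * K) * (B - 1)) :=
    (ENNReal.add_le_add_iff_left hξ.bayesLoss_ne_top).mp
      ((add_le_add (hξ.2 η hη) le_rfl).trans hle)
  rw [ENNReal.ofReal_le_ofReal_iff (mul_nonneg (by positivity) (by linarith))] at hcost
  have hBK : B * exp (-(2 * K)) ≤ c / 16 := by
    rw [exp_neg, ← div_eq_mul_inv, div_le_div_iff₀ (exp_pos _) (by norm_num)]
    linarith
  have : 2 * exp (1 - 2 * K) * (B - 1) < 5 / 12 * c :=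
    calc 2 * exp (1 - 2 * K) * (B - 1) < 2 * exp 1 * (B * exp (-(2 * K))) := by
          rw [sub_eq_add_neg 1, exp_add]
          nlinarith [exp_pos 1, exp_pos (-(2 * K))]
      _ ≤ 2 * exp 1 * (c / 16) := by gcongr
      _ < 5 / 12 * c := by nlinarith [exp_one_lt_d9]
  linarith

lemma exp_neg_two_le_two_thirds : exp (-2) ≤ 2 / 3 := by
  rw [exp_neg, inv_le_comm₀ (exp_pos 2) (by norm_num)]
  linarith [add_one_le_exp 2]

lemma sixteen_le_exp_four : (16 : ℝ) ≤ exp 4 := by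
  have h : exp 4 = exp 1 ^ 4 := by rw [← exp_nat_mul]; norm_num
  rw [h]
  nlinarith [exp_one_gt_d9, pow_le_pow_left₀ (by norm_num) (exp_one_gt_d9.le) 4]

theorem IsBayesOptimal.exists_mem_support_Ioo_exp {ξ : Design} {B s : ℝ}
    (hξ : IsBayesOptimal B ξ) (hs : 1 ≤ s) (hsB : exp (2 * s + 1) ≤ B) :
    ∃ x ∈ ξ.support, x ∈ Ioo (exp (s - 5) / B) (exp (6 * s + 11) / B) := by
  have hB : 0 < B := (exp_pos _).trans_le hsB
  have hc : 3 / 2 ≤ B * exp (-(2 * s)) :=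
    calc 3 / 2 ≤ exp 1 := by linarith [exp_one_gt_d9]
      _ = exp (2 * s + 1) * exp (-(2 * s)) := by rw [← exp_add]; ring_nf
      _ ≤ B * exp (-(2 * s)) := by gcongr
  have hcB : B * exp (-(2 * s)) ≤ 2 / 3 * B := by
    have : exp (-(2 * s)) ≤ exp (-2) := exp_le_exp.mpr (by linarith)
    nlinarith [exp_neg_two_le_two_thirds]
  have hKc : 16 * B ≤ B * exp (-(2 * s)) * exp (2 * (s + 2)) := by
    rw [mul_assoc, ← exp_add, show -(2 * s) + 2 * (s + 2) = 4 by ring]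
    nlinarith [sixteen_le_exp_four]
  obtain ⟨x, hx, hlo, hhi⟩ := hξ.exists_mem_support_Ioo hc hcB (by linarith) hKc
  refine ⟨x, hx, lt_of_le_of_lt ?_ hlo, hhi.trans_le ?_⟩
  · have hexp : exp (s - 5) * exp (1 + (s + 2)) * exp (-(2 * s)) = exp (-2) := by
      rw [← exp_add, ← exp_add]; ring_nf
    rw [div_le_div_iff₀ hB (by positivity)]
    calc exp (s - 5) * (3 * exp (1 + (s + 2)) * (B * exp (-(2 * s))))
        = 3 * B * (exp (s - 5) * exp (1 + (s + 2)) * exp (-(2 * s))) := by ring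
      _ ≤ 2 * B := by rw [hexp]; nlinarith [exp_neg_two_le_two_thirds]
  · have hexp : exp (-(2 * s)) * exp (6 * s + 11) = exp (4 * s + 11) := by
      rw [← exp_add]; ring_nf
    rw [div_le_div_iff₀ (by positivity) hB]
    calc (4 * (s + 2) + 4) * B = B * (4 * s + 11 + 1) := by ring
      _ ≤ B * exp (4 * s + 11) := by gcongr; exact add_one_le_exp _
      _ = exp (6 * s + 11) * (B * exp (-(2 * s))) := by rw [← hexp]; ring

lemma le_card_of_forall_exists_mem_Ioo {s : Finset ℝ} {d : ℕ → ℝ} (hd : Monotone d) {n : ℕ}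
    (h : ∀ k < n, ∃ x ∈ s, x ∈ Ioo (d k) (d (k + 1))) : n ≤ s.card := by
  choose! f hfs hfI using h
  have hinj : Set.InjOn f (Finset.range n : Set ℕ) := by
    intro i hi j hj hij
    by_contra hne
    have := hd.pairwise_disjoint_on_Ioo_succ hne
    simp only [Order.succ_eq_add_one, Function.onFun] at this
    exact Set.disjoint_left.mp this (hfI i (Finset.mem_range.mp hi))
      (hij ▸ hfI j (Finset.mem_range.mp hj))
  simpa using Finset.card_le_card_of_injOn f (fun k hk => hfs k (Finset.mem_range.mp hk)) hinj

/-- For the one-parameter exponential model on `[0,1]`: for every `N` there is `B₀ ≥ 1`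
such that for all `B ≥ B₀`, every Bayesian `D`-optimal design with respect to the
uniform prior on `[1,B]` is supported at more than `N` points. -/
theorem exp_model_bayes_support_unbounded (N : ℕ) :
    ∃ B₀ : ℝ, 1 ≤ B₀ ∧
      ∀ B : ℝ, B₀ ≤ B →
        ∀ ξstar : Design, ↑ξstar.support ⊆ Set.Icc (0 : ℝ) 1 →
          (∀ ξ : Design, ↑ξ.support ⊆ Set.Icc (0 : ℝ) 1 →
            bayesLoss B ξstar ≤ bayesLoss B ξ) →
          N < ξstar.support.card := by
  refine ⟨exp (2 * 8 ^ (N + 1) + 1), one_le_exp (by positivity), fun B hB ξ hsub hopt => ?_⟩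
  have hξ : IsBayesOptimal B ξ := ⟨hsub, hopt⟩
  have hB0 : 0 < B := (exp_pos _).trans_le hB
  let d : ℕ → ℝ := fun k => exp ((8 : ℝ) ^ (k + 1) - 5) / B
  have hd : Monotone d := fun i j hij => by
    simp only [d]
    gcongr
    norm_num
  refine Nat.lt_of_succ_le (le_card_of_forall_exists_mem_Ioo hd fun k hk => ?_)
  have hs : (8 : ℝ) ≤ 8 ^ (k + 1) := le_self_pow₀ (by norm_num) (by omega)
  have hsB : exp (2 * 8 ^ (k + 1) + 1) ≤ B :=
    (exp_le_exp.mpr (by gcongr; norm_num; omega)).trans hB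
  obtain ⟨x, hx, hlo, hhi⟩ := hξ.exists_mem_support_Ioo_exp (by linarith) hsB
  refine ⟨x, hx, hlo, hhi.trans_le ?_⟩
  have : (8 : ℝ) ^ (k + 1 + 1) = 8 * 8 ^ (k + 1) := by ring
  simp only [d, this]
  gcongr
  linarith
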